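/- For every ℓ ≥ 1 and m ≥ 2ℓ+1, the boundary complex ∂B^{2ℓ,ℓ−1}_m of the ball B^{2ℓ,ℓ−1}_m of the inductive construction is not a centrally symmetric simplicial complex (with respect to the involution v ↦ −v on V_m). -/
import Mathlib


namespace CS

/-- An (abstract, finite-face) simplicial complex on the vertex type `V`,
modeled as a collection of finite subsets of `V` (its faces). -/
abbrev Cplx (V : Type) := Set (Finset V)

/-- The defining property of a simplicial complex: it is closed under inclusion
(in particular every vertex that occurs in a face gives a singleton face). -/
def IsComplex {V : Type} (Δ : Cplx V) : Prop :=
  ∀ σ ∈ Δ, ∀ τ : Finset V, τ ⊆ σ → τ ∈ Δ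

/-- The vertex set of a complex. -/
def vertexSet {V : Type} (Δ : Cplx V) : Set V := {v | ({v} : Finset V) ∈ Δ}

/-- A facet: a face that is maximal with respect to inclusion. -/
def IsFacet {V : Type} (Δ : Cplx V) (σ : Finset V) : Prop :=
  σ ∈ Δ ∧ ∀ τ ∈ Δ, σ ⊆ τ → τ = σ

/-- The link of a face `τ` in `Δ`. -/
def link {V : Type} [DecidableEq V] (τ : Finset V) (Δ : Cplx V) : Cplx V :=
  {σ | σ ∈ Δ ∧ Disjoint σ τ ∧ σ ∪ τ ∈ Δ}

/-- The join of two complexes (on disjoint vertex sets). -/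
def join {V : Type} [DecidableEq V] (Δ Γ : Cplx V) : Cplx V :=
  {ρ | ∃ σ ∈ Δ, ∃ τ ∈ Γ, ρ = σ ∪ τ}

/-- The cone over `Δ` with apex `v`: the join of `Δ` with the one-vertex complex. -/
def cone {V : Type} [DecidableEq V] (Δ : Cplx V) (v : V) : Cplx V :=
  join Δ ({∅, {v}} : Cplx V)

/-- The `k`-skeleton: all faces of dimension at most `k`. -/
def skel {V : Type} (k : ℤ) (Δ : Cplx V) : Cplx V :=
  {σ ∈ Δ | (σ.card : ℤ) - 1 ≤ k}

/-- `complC Δ Γ` is the complex `Δ \ Γ`: the subcomplex of `Δ` generated by the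
facets of `Δ` that do not belong to `Γ`. -/
def complC {V : Type} (Δ Γ : Cplx V) : Cplx V :=
  {τ | ∃ σ, IsFacet Δ σ ∧ σ ∉ Γ ∧ τ ⊆ σ}

/-- A (compact) polyhedron in a real vector space: a finite union of simplices
(convex hulls of finite sets of points). -/
def IsPolyhedron {E : Type} [AddCommGroup E] [Module ℝ E] (S : Set E) : Prop :=
  ∃ F : Finset (Finset E), S = ⋃ s ∈ F, convexHull ℝ (↑s : Set E)

/-- The standard realization of a vertex in `V → ℝ`. -/
noncomputable def stdVtx {V : Type} [DecidableEq V] (v : V) : V → ℝ :=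
  fun w => if w = v then 1 else 0

/-- The geometric realization of a simplicial complex inside `V → ℝ`. -/
noncomputable def realization {V : Type} [DecidableEq V] (Δ : Cplx V) : Set (V → ℝ) :=
  ⋃ σ ∈ Δ, convexHull ℝ (stdVtx '' (↑σ : Set V))

/-- Two complexes are PL homeomorphic iff there is a homeomorphism between their
geometric realizations whose graph is a polyhedron (the standard characterization
of a PL homeomorphism between compact polyhedra). -/
def PLHomeo {V W : Type} [DecidableEq V] [DecidableEq W] (Δ : Cplx V) (Γ : Cplx W) : Prop :=
  ∃ f : (realization Δ) ≃ₜ (realization Γ),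
    IsPolyhedron {p : (V → ℝ) × (W → ℝ) |
      ∃ x : (realization Δ), p.1 = (x : V → ℝ) ∧ p.2 = ((f x : realization Γ) : W → ℝ)}

/-- The full `d`-dimensional simplex on `d+1` vertices (all subsets are faces). -/
def fullSimplex (d : ℕ) : Cplx (Fin (d + 1)) := Set.univ

/-- The boundary complex of the `(n-1)`-dimensional simplex on `n` vertices:
a combinatorial `(n-2)`-sphere.  (For `n = 1` this is `{∅}`, the `(-1)`-sphere.) -/
def boundarySimplex (n : ℕ) : Cplx (Fin n) := {σ | σ ≠ Finset.univ}

/-- A combinatorial `d`-ball: a complex PL homeomorphic to the `d`-simplex. -/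
def IsBall {V : Type} [DecidableEq V] (d : ℕ) (Δ : Cplx V) : Prop :=
  IsComplex Δ ∧ PLHomeo Δ (fullSimplex d)

/-- A combinatorial `d`-sphere: a complex PL homeomorphic to the boundary of the
`(d+1)`-simplex.  (Here `d : ℤ` so that the `(-1)`-sphere `{∅}` is included.) -/
def IsSphere {V : Type} [DecidableEq V] (d : ℤ) (Δ : Cplx V) : Prop :=
  IsComplex Δ ∧ ∃ n : ℕ, (n : ℤ) = d + 2 ∧ PLHomeo Δ (boundarySimplex n)

/-- A combinatorial sphere of some dimension. -/
def IsSomeSphere {V : Type} [DecidableEq V] (Δ : Cplx V) : Prop :=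
  ∃ d : ℤ, IsSphere d Δ

/-- A face `τ` of `B` is an interior face if its link in `B` is a combinatorial sphere. -/
def IsInteriorFace {V : Type} [DecidableEq V] (B : Cplx V) (τ : Finset V) : Prop :=
  τ ∈ B ∧ IsSomeSphere (link τ B)

/-- The boundary complex `∂B`: all faces of `B` that are not interior faces. -/
def boundaryC {V : Type} [DecidableEq V] (B : Cplx V) : Cplx V :=
  {τ ∈ B | ¬ IsSomeSphere (link τ B)}

/-- An `i`-stacked combinatorial `d`-ball: all of its interior faces have
dimension at least `d - i`. -/
def IsStackedBall {V : Type} [DecidableEq V] (d i : ℕ) (B : Cplx V) : Prop :=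
  IsBall d B ∧ ∀ τ : Finset V, IsInteriorFace B τ → (d : ℤ) - (i : ℤ) ≤ (τ.card : ℤ) - 1

/-- A combinatorial sphere is `k`-stacked if it is the boundary complex of some
`k`-stacked combinatorial ball. -/
def SphereIsStacked {V : Type} [DecidableEq V] (k : ℕ) (S : Cplx V) : Prop :=
  ∃ (d : ℕ) (B : Cplx V), IsStackedBall d k B ∧ boundaryC B = S

/-! ### The centrally symmetric world.
Vertices are modeled by nonzero integers: `v_i = i` and `-v_i = -i` for `1 ≤ i`. -/

/-- The antipode `-τ` of a face. -/
def negFace (σ : Finset ℤ) : Finset ℤ := σ.image (fun x => -x)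

/-- The antipodal image `-Δ` of a complex. -/
def negC (Δ : Cplx ℤ) : Cplx ℤ := {σ | negFace σ ∈ Δ}

/-- The vertex set `V_n = {±v_1, …, ±v_n}`. -/
def Vset (n : ℕ) : Set ℤ := {x | x ≠ 0 ∧ x.natAbs ≤ n}

/-- The boundary complex `∂C*_n` of the `n`-dimensional cross-polytope: all subsets
of `V_n` containing at most one vertex from each antipodal pair. -/
def crossB (n : ℕ) : Cplx ℤ :=
  {σ | (∀ x ∈ σ, x ≠ 0 ∧ x.natAbs ≤ n) ∧ ∀ x ∈ σ, -x ∉ σ}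

/-- A complex (on the signed-integer vertex model) is centrally symmetric if the
standard involution `v ↦ -v` is a free involution on its vertices and on its
nonempty faces. -/
def IsCS (Δ : Cplx ℤ) : Prop :=
  (∀ v ∈ vertexSet Δ, v ≠ 0) ∧ ∀ σ ∈ Δ, σ ≠ ∅ → negFace σ ∈ Δ ∧ negFace σ ≠ σ

/-- `Δ ⊆ ∂C*_n` is cs-`i`-neighborly (w.r.t. `V_n`) if its `(i-1)`-skeleton agrees
with that of `∂C*_n`. -/
def CSNeighborly (n i : ℕ) (Δ : Cplx ℤ) : Prop :=
  skel ((i : ℤ) - 1) Δ = skel ((i : ℤ) - 1) (crossB n)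

/-- The complex obtained from `D` by replacing the subcomplex `B` with `∂B * v` and
`-B` with `∂(-B) * (-v)`: keep everything generated by facets of `D` lying in
neither `B` nor `-B`, and glue in the two cones. -/
def replaceCS (D B : Cplx ℤ) (v : ℤ) : Cplx ℤ :=
  {τ | ∃ σ, IsFacet D σ ∧ σ ∉ B ∧ σ ∉ negC B ∧ τ ⊆ σ} ∪
    cone (boundaryC B) v ∪ cone (boundaryC (negC B)) (-v)

/-- The cycle `Δ¹_n = (v_1, v_2, …, v_n, -v_1, -v_2, …, -v_n, v_1)`. -/
def cycleC (n : ℕ) : Cplx ℤ :=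
  {σ | σ = ∅} ∪ {σ | ∃ x ∈ Vset n, σ = {x}} ∪
    {σ | ∃ i : ℤ, 1 ≤ i ∧ i < (n : ℤ) ∧ (σ = {i, i + 1} ∨ σ = {-i, -(i + 1)})} ∪
    {σ | σ = {(n : ℤ), -1} ∨ σ = {-(n : ℤ), 1}}

/-- The full `1`-simplex (edge) on two vertices. -/
def edgeC (a b : ℤ) : Cplx ℤ := {σ | σ ⊆ ({a, b} : Finset ℤ)}

/-- The one-vertex complex. -/
def pointC (v : ℤ) : Cplx ℤ := {∅, {v}}

mutual

/-- The balls `B^{d,i}_n` of the inductive construction. -/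
noncomputable def Bc : ℕ → ℤ → ℕ → Cplx ℤ
  | d, i, n =>
    if i < 0 then ∅
    else if d = 0 then ∅
    else if d = 1 then
      -- `B^{1,0}_n` is the edge `{-v_1, v_n}`; `B^{1,1}_n = Δ¹_n \ B^{1,0}_n`.
      if i = 0 then edgeC (-1) (n : ℤ)
      else complC (Dc 1 n) (Bc 1 0 n)
    else if i ≤ ((d / 2 : ℕ) : ℤ) then
      -- `B^{d,i}_n = (B^{d-1,i}_{n-1} * v_n) ∪ ((-B^{d-1,i-1}_{n-1}) * (-v_n))`.
      join (Bc (d - 1) i (n - 1)) (pointC (n : ℤ)) ∪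
        negC (join (Bc (d - 1) (i - 1) (n - 1)) (pointC (n : ℤ)))
    else
      -- for odd `d = 2k-1` and `i = k`: `B^{2k-1,k}_n = Δ^{2k-1}_n \ B^{2k-1,k-1}_n`.
      complC (Dc d n) (Bc d ((d / 2 : ℕ) : ℤ) n)
  termination_by d i n => (d, (i - ((d / 2 : ℕ) : ℤ)).toNat, n)
  decreasing_by
    all_goals simp only [Prod.lex_def, true_and, and_true, lt_self_iff_false, false_or]
    all_goals omega

/-- The spheres `Δ^d_n` of the inductive construction. -/
noncomputable def Dc : ℕ → ℕ → Cplx ℤ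
  | d, n =>
    if d ≤ 1 then cycleC n
    else if n ≤ d + 1 then crossB (d + 1)
    else replaceCS (Dc d (n - 1)) (Bc d ((((d + 1) / 2 : ℕ) : ℤ) - 1) (n - 1)) (n : ℤ)
  termination_by d n => (d, 0, n)
  decreasing_by
    all_goals simp only [Prod.lex_def, true_and, and_true, lt_self_iff_false, false_or]
    all_goals omega

end

/-- Simplicial isomorphism: a bijection between the vertex sets carrying faces to
faces in both directions. -/
def SIso {V W : Type} [DecidableEq W] (Δ : Cplx V) (Γ : Cplx W) : Prop :=
  ∃ f : V → W, Set.InjOn f (vertexSet Δ) ∧ f '' vertexSet Δ = vertexSet Γ ∧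
    ∀ σ : Finset V, (↑σ : Set V) ⊆ vertexSet Δ → (σ ∈ Δ ↔ σ.image f ∈ Γ)


open Finset

/-- iterated sign flip -/
def np (k : ℕ) (s : Finset ℤ) : Finset ℤ := s.image (fun x => (-1:ℤ)^k * x)

lemma neg_one_pow_mul_self (k : ℕ) (x : ℤ) : (-1:ℤ)^k * ((-1:ℤ)^k * x) = x := by
  rw [← mul_assoc, ← pow_add, ← two_mul, pow_mul]
  norm_num

lemma mem_np {k : ℕ} {s : Finset ℤ} {x : ℤ} : x ∈ np k s ↔ (-1:ℤ)^k * x ∈ s := by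
  unfold np
  rw [Finset.mem_image]
  constructor
  · rintro ⟨y, hy, rfl⟩
    rwa [neg_one_pow_mul_self]
  · intro h
    exact ⟨(-1:ℤ)^k * x, h, neg_one_pow_mul_self k x⟩

lemma mem_negFace {s : Finset ℤ} {x : ℤ} : x ∈ negFace s ↔ -x ∈ s := by
  unfold negFace
  rw [Finset.mem_image]
  constructor
  · rintro ⟨y, hy, rfl⟩; simpa using hy
  · intro h; exact ⟨-x, h, by ring⟩

lemma negFace_eq_np (s : Finset ℤ) : negFace s = np 1 s := by
  unfold negFace np
  apply Finset.image_congr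
  intro x _
  ring

lemma np_np (a b : ℕ) (s : Finset ℤ) : np a (np b s) = np (a + b) s := by
  unfold np
  rw [Finset.image_image]
  apply Finset.image_congr
  intro x _
  simp only [Function.comp_apply]
  rw [pow_add]
  ring

lemma np_even {k : ℕ} (hk : Even k) (s : Finset ℤ) : np k s = s := by
  unfold np
  rw [hk.neg_one_pow]
  simp

lemma np_union (k : ℕ) (s t : Finset ℤ) : np k (s ∪ t) = np k s ∪ np k t :=
  Finset.image_union _ _

lemma np_empty (k : ℕ) : np k (∅ : Finset ℤ) = ∅ := Finset.image_empty _

lemma np_singleton (k : ℕ) (x : ℤ) : np k ({x} : Finset ℤ) = {(-1:ℤ)^k * x} :=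
  Finset.image_singleton _ _

lemma natAbs_neg_one_pow_mul (k : ℕ) (x : ℤ) : ((-1:ℤ)^k * x).natAbs = x.natAbs := by
  rcases Nat.even_or_odd k with h | h
  · rw [h.neg_one_pow]; simp
  · rw [h.neg_one_pow]; simp

lemma mem_pointC {v : ℤ} {t : Finset ℤ} : t ∈ pointC v ↔ t = ∅ ∨ t = {v} := by
  simp [pointC]

lemma mem_negC {Δ : Cplx ℤ} {σ : Finset ℤ} : σ ∈ negC Δ ↔ negFace σ ∈ Δ := Iff.rfl

lemma mem_join_point {A : Cplx ℤ} {v : ℤ} (hA : ∀ σ ∈ A, v ∉ σ) {θ : Finset ℤ} :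
    θ ∈ join A (pointC v) ↔ θ.erase v ∈ A := by
  constructor
  · rintro ⟨g, hg, t, ht, rfl⟩
    rcases mem_pointC.1 ht with rfl | rfl
    · rw [Finset.union_empty, Finset.erase_eq_of_notMem (hA g hg)]
      exact hg
    · rw [Finset.erase_union_distrib, Finset.erase_eq_of_notMem (hA g hg),
        Finset.erase_singleton, Finset.union_empty]
      exact hg
  · intro h
    by_cases hv : v ∈ θ
    · exact ⟨θ.erase v, h, {v}, Or.inr rfl, by
        rw [Finset.union_comm, ← Finset.insert_eq, Finset.insert_erase hv]⟩
    · rw [Finset.erase_eq_of_notMem hv] at h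
      exact ⟨θ, h, ∅, Or.inl rfl, (Finset.union_empty θ).symm⟩

lemma join_empty_left (Γ : Cplx ℤ) : join (∅ : Cplx ℤ) Γ = ∅ := by
  ext ρ
  simp [join]

lemma negC_empty : negC (∅ : Cplx ℤ) = ∅ := by
  ext σ
  simp [negC]

lemma cycle_bound {n : ℕ} (hn : 1 ≤ n) {σ : Finset ℤ} (hσ : σ ∈ cycleC n)
    {x : ℤ} (hx : x ∈ σ) : x.natAbs ≤ n := by
  rcases hσ with ((rfl | ⟨y, hy, rfl⟩) | ⟨i, hi1, hi2, (rfl | rfl)⟩) | (rfl | rfl)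
  · simp at hx
  · simp at hx
    subst hx
    exact hy.2
  · simp at hx
    rcases hx with rfl | rfl <;> omega
  · simp at hx
    rcases hx with rfl | rfl <;> omega
  · simp at hx
    rcases hx with rfl | rfl <;> omega
  · simp at hx
    rcases hx with rfl | rfl <;> omega

lemma boundsAux : ∀ N : ℕ,
    (∀ d n : ℕ, 2*(d+n) ≤ N → d+1 ≤ n → ∀ σ ∈ Dc d n, ∀ x ∈ σ, x.natAbs ≤ n) ∧
    (∀ (d n : ℕ) (i : ℤ), 2*(d+n)+1 ≤ N → d+1 ≤ n → ∀ σ ∈ Bc d i n, ∀ x ∈ σ, x.natAbs ≤ n) := by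
  intro N
  induction N using Nat.strong_induction_on with
  | _ N ih =>
  have hD : ∀ d n : ℕ, 2*(d+n) ≤ N → d+1 ≤ n → ∀ σ ∈ Dc d n, ∀ x ∈ σ, x.natAbs ≤ n := by
    intro d n hN hn σ hσ x hx
    rw [Dc.eq_def] at hσ; dsimp only at hσ
    split_ifs at hσ with h1 h2
    · exact cycle_bound (by omega) hσ hx
    · exact le_trans ((hσ.1 x hx).2) (by omega)
    · -- replaceCS branch : n ≥ d + 2, d ≥ 2
      rcases hσ with (⟨ρ, hfac, -, -, hsub⟩ | hσ) | hσ
      · have := (ih (N-1) (by omega)).1 d (n-1) (by omega) (by omega) ρ hfac.1 x (hsub hx)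
        omega
      · rcases hσ with ⟨g, hg, t, ht, rfl⟩
        rcases Finset.mem_union.1 hx with hxg | hxt
        · have hgB := hg.1
          have := (ih (N-1) (by omega)).2 d (n-1) _ (by omega) (by omega) g hgB x hxg
          omega
        · rcases mem_pointC.1 ht with rfl | rfl
          · simp at hxt
          · simp at hxt
            subst hxt
            simp
      · rcases hσ with ⟨g, hg, t, ht, rfl⟩
        rcases Finset.mem_union.1 hx with hxg | hxt
        · have hgB : negFace g ∈ Bc d _ (n-1) := hg.1
          have hmx : -x ∈ negFace g := mem_negFace.2 (by simpa using hxg)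
          have := (ih (N-1) (by omega)).2 d (n-1) _ (by omega) (by omega) (negFace g) hgB (-x) hmx
          simp at this
          omega
        · rcases mem_pointC.1 ht with rfl | rfl
          · simp at hxt
          · simp at hxt
            subst hxt
            simp
  refine ⟨hD, ?_⟩
  intro d n i hN hn σ hσ x hx
  rw [Bc.eq_def] at hσ; dsimp only at hσ
  split_ifs at hσ with h1 h2 h3 h4 h5
  · simp at hσ
  · simp at hσ
  · -- d = 1, i = 0 : edge
    have : x = -1 ∨ x = (n:ℤ) := by
      have := hσ hx
      simpa using this
    rcases this with rfl | rfl <;> simp <;> omega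
  · -- d = 1, i ≠ 0 : complC (Dc 1 n) _
    rcases hσ with ⟨ρ, hfac, -, hsub⟩
    exact hD 1 n (by omega) (by omega) ρ hfac.1 x (hsub hx)
  · -- join branch
    rcases hσ with hσ | hσ
    · rcases hσ with ⟨g, hg, t, ht, rfl⟩
      rcases Finset.mem_union.1 hx with hxg | hxt
      · have := (ih (N-1) (by omega)).2 (d-1) (n-1) _ (by omega) (by omega) g hg x hxg
        omega
      · rcases mem_pointC.1 ht with rfl | rfl
        · simp at hxt
        · simp at hxt; subst hxt; simp
    · rcases hσ with ⟨g, hg, t, ht, hface⟩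
      have hmx : -x ∈ negFace σ := mem_negFace.2 (by simpa using hx)
      rw [hface] at hmx
      rcases Finset.mem_union.1 hmx with hxg | hxt
      · have := (ih (N-1) (by omega)).2 (d-1) (n-1) _ (by omega) (by omega) g hg (-x) hxg
        simp at this
        omega
      · rcases mem_pointC.1 ht with rfl | rfl
        · simp at hxt
        · simp at hxt
          omega
  · -- complC branch
    rcases hσ with ⟨ρ, hfac, -, hsub⟩
    exact hD d n (by omega) (by omega) ρ hfac.1 x (hsub hx)

lemma Bc_bound {d n : ℕ} (hn : d+1 ≤ n) {i : ℤ} {σ : Finset ℤ} (hσ : σ ∈ Bc d i n)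
    {x : ℤ} (hx : x ∈ σ) : x.natAbs ≤ n :=
  (boundsAux (2*(d+n)+1)).2 d n i le_rfl hn σ hσ x hx

lemma Bc_neg_i {d : ℕ} {i : ℤ} {n : ℕ} (hi : i < 0) : Bc d i n = ∅ := by
  rw [Bc.eq_def]
  dsimp only
  rw [if_pos hi]

lemma Bc_join_eq {d n : ℕ} {i : ℤ} (hd : 2 ≤ d) (hi0 : 0 ≤ i) (hi : i ≤ ((d/2 : ℕ):ℤ)) :
    Bc d i n = join (Bc (d-1) i (n-1)) (pointC (n:ℤ)) ∪
      negC (join (Bc (d-1) (i-1) (n-1)) (pointC (n:ℤ))) := by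
  rw [Bc.eq_def]
  dsimp only
  rw [if_neg (by omega : ¬ i < 0), if_neg (by omega : ¬ d = 0), if_neg (by omega : ¬ d = 1),
    if_pos hi]

lemma step_pos {d n : ℕ} {i : ℤ} (hd : 2 ≤ d) (hi0 : 0 ≤ i) (hi : i ≤ ((d/2 : ℕ):ℤ))
    (hn : d+1 ≤ n) {θ : Finset ℤ} (hθ : ((n:ℕ):ℤ) ∈ θ) :
    θ ∈ Bc d i n ↔ θ.erase (n:ℤ) ∈ Bc (d-1) i (n-1) := by
  have havoid : ∀ σ ∈ Bc (d-1) i (n-1), ((n:ℕ):ℤ) ∉ σ := by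
    intro σ hσ h
    have := Bc_bound (by omega) hσ h
    simp at this
    omega
  have havoid' : ∀ σ ∈ Bc (d-1) (i-1) (n-1), ((n:ℕ):ℤ) ∉ σ := by
    intro σ hσ h
    have := Bc_bound (by omega) hσ h
    simp at this
    omega
  rw [Bc_join_eq hd hi0 hi]
  constructor
  · rintro (h | h)
    · exact (mem_join_point havoid).1 h
    · exfalso
      have h2 := (mem_join_point havoid').1 h
      have hm : (-(n:ℤ)) ∈ (negFace θ).erase (n:ℤ) := by
        refine Finset.mem_erase.2 ⟨by omega, mem_negFace.2 (by simpa using hθ)⟩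
      have := Bc_bound (by omega) h2 hm
      simp at this
      omega
  · intro h
    exact Or.inl ((mem_join_point havoid).2 h)

lemma step_neg {d n : ℕ} {i : ℤ} (hd : 2 ≤ d) (hi0 : 0 ≤ i) (hi : i ≤ ((d/2 : ℕ):ℤ))
    (hn : d+1 ≤ n) {θ : Finset ℤ} (hθ : (-(n:ℤ)) ∈ θ) :
    θ ∈ Bc d i n ↔ (negFace θ).erase (n:ℤ) ∈ Bc (d-1) (i-1) (n-1) := by
  have havoid : ∀ σ ∈ Bc (d-1) i (n-1), ((n:ℕ):ℤ) ∉ σ := by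
    intro σ hσ h
    have := Bc_bound (by omega) hσ h
    simp at this
    omega
  have havoid' : ∀ σ ∈ Bc (d-1) (i-1) (n-1), ((n:ℕ):ℤ) ∉ σ := by
    intro σ hσ h
    have := Bc_bound (by omega) hσ h
    simp at this
    omega
  rw [Bc_join_eq hd hi0 hi]
  constructor
  · rintro (h | h)
    · exfalso
      have h2 := (mem_join_point havoid).1 h
      have hm : (-(n:ℤ)) ∈ θ.erase (n:ℤ) := Finset.mem_erase.2 ⟨by omega, hθ⟩
      have := Bc_bound (by omega) h2 hm
      simp at this
      omega
    · exact (mem_join_point havoid').1 h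
  · intro h
    exact Or.inr ((mem_join_point havoid').2 h)

lemma step_skip {d n : ℕ} {i : ℤ} (hd : 2 ≤ d) (hi0 : 0 ≤ i) (hi : i ≤ ((d/2 : ℕ):ℤ))
    (hn : d+1 ≤ n) {θ : Finset ℤ} (hθ1 : ((n:ℕ):ℤ) ∉ θ) (hθ2 : (-(n:ℤ)) ∉ θ) :
    θ ∈ Bc d i n ↔ (θ ∈ Bc (d-1) i (n-1) ∨ negFace θ ∈ Bc (d-1) (i-1) (n-1)) := by
  have havoid : ∀ σ ∈ Bc (d-1) i (n-1), ((n:ℕ):ℤ) ∉ σ := by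
    intro σ hσ h
    have := Bc_bound (by omega) hσ h
    simp at this
    omega
  have havoid' : ∀ σ ∈ Bc (d-1) (i-1) (n-1), ((n:ℕ):ℤ) ∉ σ := by
    intro σ hσ h
    have := Bc_bound (by omega) hσ h
    simp at this
    omega
  have hne : ((n:ℕ):ℤ) ∉ negFace θ := by
    intro h
    exact hθ2 (mem_negFace.1 h)
  rw [Bc_join_eq hd hi0 hi]
  rw [Set.mem_union]
  rw [show (θ ∈ join (Bc (d-1) i (n-1)) (pointC (n:ℤ))) ↔ θ ∈ Bc (d-1) i (n-1) by
      rw [mem_join_point havoid, Finset.erase_eq_of_notMem hθ1]]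
  rw [show (θ ∈ negC (join (Bc (d-1) (i-1) (n-1)) (pointC (n:ℤ)))) ↔
      negFace θ ∈ Bc (d-1) (i-1) (n-1) by
      rw [mem_negC, mem_join_point havoid', Finset.erase_eq_of_notMem hne]]

lemma incl_neg {d n : ℕ} {i : ℤ} (hd : 2 ≤ d) (hi0 : 0 ≤ i) (hi : i ≤ ((d/2 : ℕ):ℤ))
    {θ : Finset ℤ} (h : negFace θ ∈ Bc (d-1) (i-1) (n-1)) : θ ∈ Bc d i n := by
  rw [Bc_join_eq hd hi0 hi]
  exact Or.inr ⟨negFace θ, h, ∅, Or.inl rfl, (Finset.union_empty _).symm⟩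

def Dfin (n t : ℕ) : Finset ℤ :=
  (Finset.range t).image (fun j => (-1:ℤ)^(j+1) * ((n - j : ℕ) : ℤ))

def Pfin (n t : ℕ) : Finset ℤ :=
  (Finset.range t).image (fun j => ((n - j : ℕ) : ℤ))

def Sfin (d n : ℕ) : Finset ℤ :=
  insert (-1 : ℤ) ((Finset.Icc (n-d+1) n).image (Nat.cast : ℕ → ℤ))

lemma mem_Dfin {n t : ℕ} {x : ℤ} :
    x ∈ Dfin n t ↔ ∃ j, j < t ∧ (-1:ℤ)^(j+1) * ((n - j : ℕ) : ℤ) = x := by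
  simp [Dfin]

lemma Dfin_abs {n t : ℕ} (h : t ≤ n) {x : ℤ} (hx : x ∈ Dfin n t) :
    n - t + 1 ≤ x.natAbs ∧ x.natAbs ≤ n := by
  rcases mem_Dfin.1 hx with ⟨j, hj, rfl⟩
  rw [natAbs_neg_one_pow_mul]
  simp only [Int.natAbs_natCast]
  omega

lemma mem_Pfin {n t : ℕ} (h : t ≤ n) {x : ℤ} :
    x ∈ Pfin n t ↔ ((n:ℤ) - t + 1 ≤ x ∧ x ≤ n) := by
  simp only [Pfin, Finset.mem_image, Finset.mem_range]
  constructor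
  · rintro ⟨j, hj, rfl⟩
    omega
  · intro hx
    exact ⟨n - x.toNat, by omega, by omega⟩

lemma mem_castIcc {a b : ℕ} {x : ℤ} :
    x ∈ (Finset.Icc a b).image (Nat.cast : ℕ → ℤ) ↔ ((a:ℤ) ≤ x ∧ x ≤ b) := by
  simp only [Finset.mem_image, Finset.mem_Icc]
  constructor
  · rintro ⟨y, hy, rfl⟩
    omega
  · intro hx
    exact ⟨x.toNat, by omega, by omega⟩

lemma mem_Sfin {d n : ℕ} (h : d ≤ n) {x : ℤ} :
    x ∈ Sfin d n ↔ (x = -1 ∨ ((n:ℤ) - d + 1 ≤ x ∧ x ≤ n)) := by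
  simp only [Sfin, Finset.mem_insert, mem_castIcc]
  constructor
  · rintro (rfl | hx)
    · exact Or.inl rfl
    · right; omega
  · rintro (rfl | hx)
    · exact Or.inl rfl
    · right; omega

lemma Dfin_succ {n t : ℕ} (hn : t + 1 ≤ n) :
    negFace (Dfin n (t+1)) = insert ((n:ℕ):ℤ) (Dfin (n-1) t) := by
  ext x
  simp only [mem_negFace, mem_Dfin, Finset.mem_insert]
  constructor
  · rintro ⟨j, hj, hx⟩
    rcases Nat.eq_zero_or_pos j with rfl | hj0
    · left
      simp at hx
      omega
    · right
      refine ⟨j - 1, by omega, ?_⟩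
      have hj1 : j - 1 + 1 = j := by omega
      have hc : ((n - 1 - (j-1) : ℕ) : ℤ) = ((n - j : ℕ) : ℤ) := by omega
      rw [hc]
      have : (-1:ℤ)^(j+1) = -((-1:ℤ)^(j-1+1)) := by
        rw [hj1, pow_succ]
        ring
      rw [this] at hx
      linarith [hx]
  · rintro (rfl | ⟨j, hj, hx⟩)
    · exact ⟨0, by omega, by simp⟩
    · refine ⟨j + 1, by omega, ?_⟩
      have hc : ((n - (j+1) : ℕ) : ℤ) = ((n - 1 - j : ℕ) : ℤ) := by omega
      rw [hc]
      rw [pow_succ]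
      linarith [hx]

lemma Pfin_succ {n t : ℕ} (hn : t + 1 ≤ n) :
    Pfin n (t+1) = insert ((n:ℕ):ℤ) (Pfin (n-1) t) := by
  ext x
  rw [mem_Pfin (by omega), Finset.mem_insert, mem_Pfin (by omega)]
  omega

lemma Bc_zero : ∀ d n : ℕ, 1 ≤ d → d + 1 ≤ n → Bc d 0 n = {σ | σ ⊆ Sfin d n} := by
  intro d
  induction d with
  | zero => intro n h; omega
  | succ d ihd =>
    intro n hd hn
    rcases Nat.eq_zero_or_pos d with rfl | hd1
    · -- d + 1 = 1 : edge case
      rw [Bc.eq_def]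
      dsimp only
      rw [if_neg (by omega : ¬ (0:ℤ) < 0), if_neg (by omega : ¬ (1:ℕ) = 0),
        if_pos rfl, if_pos rfl]
      ext σ
      simp only [edgeC, Set.mem_setOf_eq]
      have : Sfin 1 n = {-1, ((n:ℕ):ℤ)} := by
        unfold Sfin
        rw [show n - 1 + 1 = n by omega, Finset.Icc_self, Finset.image_singleton]
      rw [this]
    · -- inductive case
      have h2 : 2 ≤ d + 1 := by omega
      rw [Bc_join_eq h2 le_rfl (by positivity)]
      rw [Bc_neg_i (by omega : (0:ℤ) - 1 < 0), join_empty_left, negC_empty]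
      rw [Set.union_empty]
      have hsub : d + 1 - 1 = d := by omega
      have hrec := ihd (n-1) (by omega) (by omega)
      ext θ
      rw [Set.mem_setOf_eq]
      rw [show (d + 1 - 1) = d from hsub]
      have havoid : ∀ σ ∈ Bc d 0 (n-1), ((n:ℕ):ℤ) ∉ σ := by
        intro σ hσ h
        have := Bc_bound (by omega) hσ h
        simp at this
        omega
      rw [mem_join_point havoid, hrec, Set.mem_setOf_eq]
      rw [← Finset.subset_insert_iff]
      have : insert ((n:ℕ):ℤ) (Sfin d (n-1)) = Sfin (d+1) n := by
        ext x
        rw [Finset.mem_insert, mem_Sfin (by omega), mem_Sfin (by omega)]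
        omega
      rw [this]

lemma negChain : ∀ (t d n : ℕ) (i : ℤ) (φ : Finset ℤ),
    (∀ j, j < t → 2 ≤ d - j) → (∀ j, j < t → (j:ℤ) ≤ i) →
    (∀ j, j < t → i - j ≤ (((d-j)/2 : ℕ):ℤ)) → d + 1 ≤ n →
    (∀ j, j < t → (-1:ℤ)^(j+1) * ((n-j : ℕ):ℤ) ∈ φ) →
    (φ ∈ Bc d i n ↔ np t (φ \ Dfin n t) ∈ Bc (d-t) (i-(t:ℤ)) (n-t)) := by
  intro t
  induction t with
  | zero =>
    intro d n i φ _ _ _ _ _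
    have h1 : Dfin n 0 = ∅ := by simp [Dfin]
    rw [h1, Finset.sdiff_empty, np_even Even.zero]
    norm_num
  | succ t iht =>
    intro d n i φ ht hit hi2 hn hmem
    have hd : 2 ≤ d := by have := ht 0 (by omega); omega
    have hdt : t + 2 ≤ d := by have := ht t (by omega); omega
    have hi0 : 0 ≤ i := hit 0 (by omega)
    have hi : i ≤ ((d/2 : ℕ):ℤ) := by have := hi2 0 (by omega); simpa using this
    have hθ : (-(n:ℤ)) ∈ φ := by
      have := hmem 0 (by omega)
      simpa using this
    rw [step_neg hd hi0 hi hn hθ]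
    set φ' := (negFace φ).erase ((n:ℕ):ℤ) with hφ'
    have hmem' : ∀ j, j < t → (-1:ℤ)^(j+1) * ((n-1-j : ℕ):ℤ) ∈ φ' := by
      intro j hj
      have h1 := hmem (j+1) (by omega)
      refine Finset.mem_erase.2 ⟨?_, ?_⟩
      · intro heq
        have := congrArg Int.natAbs heq
        rw [natAbs_neg_one_pow_mul] at this
        simp only [Int.natAbs_natCast] at this
        omega
      · rw [mem_negFace]
        have hc : ((n-1-j : ℕ):ℤ) = ((n-(j+1) : ℕ):ℤ) := by omega
        rw [hc]
        have : -((-1:ℤ)^(j+1) * ((n-(j+1) : ℕ):ℤ)) = (-1:ℤ)^(j+1+1) * ((n-(j+1) : ℕ):ℤ) := by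
          rw [pow_succ]; ring
        rw [this]
        exact h1
    have hstep := iht (d-1) (n-1) (i-1) φ'
      (fun j hj => by have := ht (j+1) (by omega); omega)
      (fun j hj => by have := hit (j+1) (by omega); push_cast; omega)
      (fun j hj => by
        have := hi2 (j+1) (by omega)
        have hc : d - 1 - j = d - (j+1) := by omega
        rw [hc]
        omega)
      (by omega) hmem'
    rw [hstep]
    -- identify the two sides
    have hsets : φ' \ Dfin (n-1) t = negFace (φ \ Dfin n (t+1)) := by
      rw [negFace_eq_np]
      have hD : negFace (Dfin n (t+1)) = insert ((n:ℕ):ℤ) (Dfin (n-1) t) := Dfin_succ (by omega)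
      ext x
      simp only [hφ', Finset.mem_sdiff, Finset.mem_erase, mem_np]
      have hx1 : (-1:ℤ)^1 * x = -x := by ring
      rw [hx1]
      constructor
      · rintro ⟨⟨hxn, hxneg⟩, hxD⟩
        refine ⟨mem_negFace.1 hxneg, ?_⟩
        intro hmem2
        have hx2 : x ∈ negFace (Dfin n (t+1)) := mem_negFace.2 hmem2
        rw [hD] at hx2
        rcases Finset.mem_insert.1 hx2 with h | h
        · exact hxn h
        · exact hxD h
      · rintro ⟨hxφ, hxD⟩
        refine ⟨⟨?_, mem_negFace.2 hxφ⟩, ?_⟩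
        · rintro rfl
          apply hxD
          refine mem_Dfin.2 ⟨0, by omega, ?_⟩
          push_cast
          omega
        · intro hxDt
          apply hxD
          have hx2 : x ∈ negFace (Dfin n (t+1)) := by
            rw [hD]
            exact Finset.mem_insert_of_mem hxDt
          exact mem_negFace.1 hx2
    rw [hsets, negFace_eq_np, np_np]
    have e1 : d - 1 - t = d - (t+1) := by omega
    have e2 : n - 1 - t = n - (t+1) := by omega
    have e3 : i - 1 - (t:ℤ) = i - ((t+1 : ℕ):ℤ) := by push_cast; ring
    have e4 : t + 1 = 1 + t := by omega
    rw [e1, e2, e3, e4]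

lemma posChain : ∀ (t d n : ℕ) (i : ℤ) (φ : Finset ℤ),
    (∀ j, j < t → 2 ≤ d - j) → 0 ≤ i →
    (∀ j, j < t → i ≤ (((d-j)/2 : ℕ):ℤ)) → d + 1 ≤ n →
    (∀ j, j < t → ((n-j : ℕ):ℤ) ∈ φ) →
    (φ ∈ Bc d i n ↔ φ \ Pfin n t ∈ Bc (d-t) i (n-t)) := by
  intro t
  induction t with
  | zero =>
    intro d n i φ _ _ _ _ _
    have h1 : Pfin n 0 = ∅ := by simp [Pfin]
    rw [h1, Finset.sdiff_empty]
    norm_num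
  | succ t iht =>
    intro d n i φ ht hi0 hi2 hn hmem
    have hd : 2 ≤ d := by have := ht 0 (by omega); omega
    have hdt : t + 2 ≤ d := by have := ht t (by omega); omega
    have hi : i ≤ ((d/2 : ℕ):ℤ) := by have := hi2 0 (by omega); simpa using this
    have hθ : ((n:ℕ):ℤ) ∈ φ := by simpa using hmem 0 (by omega)
    rw [step_pos hd hi0 hi hn hθ]
    set φ' := φ.erase ((n:ℕ):ℤ) with hφ'
    have hmem' : ∀ j, j < t → ((n-1-j : ℕ):ℤ) ∈ φ' := by
      intro j hj
      refine Finset.mem_erase.2 ⟨by omega, ?_⟩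
      have := hmem (j+1) (by omega)
      have hc : ((n-1-j : ℕ):ℤ) = ((n-(j+1) : ℕ):ℤ) := by omega
      rw [hc]
      exact this
    have hstep := iht (d-1) (n-1) i φ'
      (fun j hj => by have := ht (j+1) (by omega); omega)
      hi0
      (fun j hj => by
        have := hi2 (j+1) (by omega)
        have hc : d - 1 - j = d - (j+1) := by omega
        rw [hc]
        omega)
      (by omega) hmem'
    rw [hstep]
    have hsets : φ' \ Pfin (n-1) t = φ \ Pfin n (t+1) := by
      rw [Pfin_succ (by omega), hφ']
      ext x
      simp only [Finset.mem_sdiff, Finset.mem_erase, Finset.mem_insert]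
      tauto
    rw [hsets]
    have e1 : d - 1 - t = d - (t+1) := by omega
    have e2 : n - 1 - t = n - (t+1) := by omega
    rw [e1, e2]

lemma inclChain : ∀ (t d n : ℕ) (i : ℤ) (φ : Finset ℤ),
    (∀ j, j < t → 2 ≤ d - j) → (∀ j, j < t → (j:ℤ) ≤ i) →
    (∀ j, j < t → i - j ≤ (((d-j)/2 : ℕ):ℤ)) →
    np t φ ∈ Bc (d-t) (i-(t:ℤ)) (n-t) → φ ∈ Bc d i n := by
  intro t
  induction t with
  | zero =>
    intro d n i φ _ _ _ h
    rw [np_even Even.zero] at h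
    norm_num at h
    exact h
  | succ t iht =>
    intro d n i φ ht hit hi2 h
    have hd : 2 ≤ d := by have := ht 0 (by omega); omega
    have hi0 : 0 ≤ i := hit 0 (by omega)
    have hi : i ≤ ((d/2 : ℕ):ℤ) := by have := hi2 0 (by omega); simpa using this
    apply incl_neg hd hi0 hi
    apply iht (d-1) (n-1) (i-1) (negFace φ)
      (fun j hj => by have := ht (j+1) (by omega); omega)
      (fun j hj => by have := hit (j+1) (by omega); push_cast at this ⊢; omega)
      (fun j hj => by
        have := hi2 (j+1) (by omega)
        have hc : d - 1 - j = d - (j+1) := by omega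
        rw [hc]
        omega)
    rw [negFace_eq_np, np_np]
    have e1 : d - 1 - t = d - (t+1) := by omega
    have e2 : n - 1 - t = n - (t+1) := by omega
    have e3 : i - 1 - (t:ℤ) = i - ((t+1 : ℕ):ℤ) := by push_cast; ring
    rw [e1, e2, e3]
    exact h

lemma cycle_card {n : ℕ} {σ : Finset ℤ} (hσ : σ ∈ cycleC n) : σ.card ≤ 2 := by
  have h2 : ∀ a b : ℤ, ({a, b} : Finset ℤ).card ≤ 2 := fun a b =>
    le_trans (Finset.card_insert_le _ _) (by simp)
  rcases hσ with ((rfl | ⟨y, hy, rfl⟩) | ⟨i, hi1, hi2, (rfl | rfl)⟩) | (rfl | rfl)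
  · simp
  · simp
  · exact h2 _ _
  · exact h2 _ _
  · exact h2 _ _
  · exact h2 _ _

lemma not_mem_Bc11 {n : ℕ} (hn : 2 ≤ n) : ({-1, ((n:ℕ):ℤ)} : Finset ℤ) ∉ Bc 1 1 n := by
  have hBc : Bc 1 1 n = complC (Dc 1 n) (Bc 1 0 n) := by
    rw [Bc.eq_def]
    dsimp only
    rw [if_neg (by omega : ¬ (1:ℤ) < 0), if_neg (by omega : ¬ (1:ℕ) = 0), if_pos rfl,
      if_neg (by omega : ¬ (1:ℤ) = 0)]
  have hB0 : Bc 1 0 n = edgeC (-1) ((n:ℕ):ℤ) := by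
    rw [Bc.eq_def]
    dsimp only
    rw [if_neg (by omega : ¬ (0:ℤ) < 0), if_neg (by omega : ¬ (1:ℕ) = 0), if_pos rfl,
      if_pos rfl]
  have hDc : Dc 1 n = cycleC n := by
    rw [Dc.eq_def]
    dsimp only
    rw [if_pos (by omega : (1:ℕ) ≤ 1)]
  rw [hBc]
  rintro ⟨ρ, hfac, hρnot, hsub⟩
  rw [hDc] at hfac
  have hcard : ρ.card ≤ 2 := cycle_card hfac.1
  have hne : (-1 : ℤ) ≠ ((n:ℕ):ℤ) := by omega
  have hcard2 : ({-1, ((n:ℕ):ℤ)} : Finset ℤ).card = 2 := by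
    rw [Finset.card_insert_of_notMem (fun h => by simp at h)]
    simp
  have heq : ({-1, ((n:ℕ):ℤ)} : Finset ℤ) = ρ :=
    Finset.eq_of_subset_of_card_le hsub (by omega)
  apply hρnot
  rw [hB0, ← heq]
  intro x hx
  simp only [Finset.mem_insert, Finset.mem_singleton] at hx
  rcases hx with rfl | rfl <;> simp

lemma realization_pair (c : ℤ) : realization ({∅, {c}} : Cplx ℤ) = {stdVtx c} := by
  unfold realization
  ext p
  simp only [Set.mem_iUnion, Set.mem_singleton_iff]
  constructor
  · rintro ⟨σ, hσ, hp⟩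
    rcases hσ with rfl | rfl
    · simp only [Finset.coe_empty, Set.image_empty, convexHull_empty] at hp
      exact absurd hp (Set.notMem_empty p)
    · simp only [Finset.coe_singleton, Set.image_singleton, convexHull_singleton] at hp
      exact hp
  · rintro rfl
    refine ⟨{c}, Or.inr rfl, ?_⟩
    simp only [Finset.coe_singleton, Set.image_singleton, convexHull_singleton]
    rfl

lemma realization_bdry_small {n : ℕ} (hn : n ≤ 1) : realization (boundarySimplex n) = ∅ := by
  unfold realization
  ext p
  simp only [Set.mem_iUnion, Set.mem_empty_iff_false, iff_false]
  rintro ⟨σ, hσ, hp⟩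
  interval_cases n
  · exact hσ (Finset.eq_univ_iff_forall.2 (fun x => x.elim0))
  · have hσe : σ = ∅ := by
      rcases Finset.subset_singleton_iff.1 (show σ ⊆ {(0 : Fin 1)} by
        intro x hx
        simp [Fin.eq_zero x]) with h | h
      · exact h
      · exfalso
        apply hσ
        rw [h]
        ext x
        simp [Fin.eq_zero x]
    subst hσe
    simp only [Finset.coe_empty, Set.image_empty, convexHull_empty] at hp
    exact hp

lemma stdVtx_mem_bdry {n : ℕ} (hn : 2 ≤ n) (i : Fin n) :
    stdVtx i ∈ realization (boundarySimplex n) := by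
  unfold realization
  rw [Set.mem_iUnion]
  refine ⟨{i}, ?_⟩
  rw [Set.mem_iUnion]
  refine ⟨?_, ?_⟩
  · intro h
    have hcard := congrArg Finset.card h
    rw [Finset.card_singleton, Finset.card_univ, Fintype.card_fin] at hcard
    omega
  · simp only [Finset.coe_singleton, Set.image_singleton, convexHull_singleton]
    rfl

lemma not_sphere_pair (c : ℤ) : ¬ IsSomeSphere ({∅, {c}} : Cplx ℤ) := by
  rintro ⟨d, _, n, hn, f, -⟩
  have hreal := realization_pair c
  rcases Nat.lt_or_ge n 2 with h2 | h2
  · -- realization of target is empty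
    have hempty := realization_bdry_small (by omega : n ≤ 1)
    have hx : stdVtx c ∈ realization ({∅, {c}} : Cplx ℤ) :=
      (Set.ext_iff.1 hreal (stdVtx c)).2 rfl
    rw [Set.eq_empty_iff_forall_notMem] at hempty
    exact hempty _ (f ⟨stdVtx c, hx⟩).2
  · obtain ⟨k, rfl⟩ : ∃ k, n = k + 2 := ⟨n - 2, by omega⟩
    have h01 : (0 : Fin (k+2)) ≠ (1 : Fin (k+2)) := by
      intro h
      exact absurd (congrArg Fin.val h) (by simp)
    set A : realization (boundarySimplex (k+2)) :=
      ⟨stdVtx (0 : Fin (k+2)), stdVtx_mem_bdry (by omega) 0⟩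
    set B : realization (boundarySimplex (k+2)) :=
      ⟨stdVtx (1 : Fin (k+2)), stdVtx_mem_bdry (by omega) 1⟩
    have hA : ((f.symm A : realization ({∅, {c}} : Cplx ℤ)) : ℤ → ℝ) ∈ ({stdVtx c} : Set (ℤ → ℝ)) :=
      (Set.ext_iff.1 hreal _).1 (f.symm A).2
    have hB : ((f.symm B : realization ({∅, {c}} : Cplx ℤ)) : ℤ → ℝ) ∈ ({stdVtx c} : Set (ℤ → ℝ)) :=
      (Set.ext_iff.1 hreal _).1 (f.symm B).2
    rw [Set.mem_singleton_iff] at hA hB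
    have hAB : f.symm A = f.symm B := Subtype.ext (hA.trans hB.symm)
    have hAB2 : A = B := f.symm.injective hAB
    have hval : stdVtx (0 : Fin (k+2)) = stdVtx (1 : Fin (k+2)) := congrArg Subtype.val hAB2
    have hc := congrFun hval (0 : Fin (k+2))
    unfold stdVtx at hc
    rw [if_pos rfl, if_neg h01] at hc
    norm_num at hc

theorem statement17' (l m : ℕ) (hl : 1 ≤ l) (hm : 2 * l + 1 ≤ m) :
    ¬ (∀ σ ∈ boundaryC (Bc (2 * l) ((l : ℤ) - 1) m), σ ≠ ∅ →
        negFace σ ∈ boundaryC (Bc (2 * l) ((l : ℤ) - 1) m)) := by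
  intro H
  rcases eq_or_lt_of_le hl with hl1 | hl2
  · -- case l = 1
    obtain rfl : l = 1 := hl1.symm
    have hm3 : 3 ≤ m := by omega
    have hB : Bc (2*1) (((1:ℕ):ℤ) - 1) m = {σ | σ ⊆ Sfin 2 m} := by
      rw [show ((1:ℕ):ℤ) - 1 = 0 by norm_num]
      exact Bc_zero 2 m (by norm_num) (by omega)
    set w : ℤ := ((m-1 : ℕ) : ℤ) with hwdef
    set σ' : Finset ℤ := {-1, ((m:ℕ):ℤ)} with hσ'def
    have hmemS : ∀ x : ℤ, x ∈ Sfin 2 m ↔ (x = -1 ∨ ((m:ℤ)-1 ≤ x ∧ x ≤ (m:ℤ))) := by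
      intro x
      rw [mem_Sfin (by omega)]
      omega
    have hσ'B : σ' ∈ Bc (2*1) (((1:ℕ):ℤ) - 1) m := by
      rw [hB]
      intro x hx
      simp only [hσ'def, Finset.mem_insert, Finset.mem_singleton] at hx
      rw [hmemS]
      omega
    have hwB : ({w} : Finset ℤ) ∈ Bc (2*1) (((1:ℕ):ℤ) - 1) m := by
      rw [hB]
      intro x hx
      simp only [Finset.mem_singleton] at hx
      rw [hmemS]
      omega
    have h0B : (∅ : Finset ℤ) ∈ Bc (2*1) (((1:ℕ):ℤ) - 1) m := by
      rw [hB]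
      exact Finset.empty_subset _
    have hlink : link σ' (Bc (2*1) (((1:ℕ):ℤ) - 1) m) = {∅, {w}} := by
      ext ρ
      constructor
      · rintro ⟨h1, h2, h3⟩
        rw [hB, Set.mem_setOf_eq] at h3
        have hρw : ρ ⊆ {w} := by
          intro x hx
          have hxS := h3 (Finset.mem_union_left _ hx)
          rw [hmemS] at hxS
          have hxσ : x ∉ σ' := Finset.disjoint_left.1 h2 hx
          simp only [hσ'def, Finset.mem_insert, Finset.mem_singleton, not_or] at hxσ
          rw [Finset.mem_singleton]
          omega
        rcases Finset.subset_singleton_iff.1 hρw with rfl | rfl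
        · exact Or.inl rfl
        · exact Or.inr rfl
      · rintro (rfl | rfl)
        · exact ⟨h0B, Finset.disjoint_empty_left _, by
            rw [Finset.empty_union]; exact hσ'B⟩
        · refine ⟨hwB, ?_, ?_⟩
          · rw [Finset.disjoint_singleton_left]
            simp only [hσ'def, Finset.mem_insert, Finset.mem_singleton, not_or]
            omega
          · rw [hB, Set.mem_setOf_eq]
            intro x hx
            simp only [hσ'def, Finset.mem_union, Finset.mem_insert,
              Finset.mem_singleton] at hx
            rw [hmemS]
            omega
    have hbd : σ' ∈ boundaryC (Bc (2*1) (((1:ℕ):ℤ) - 1) m) :=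
      ⟨hσ'B, by rw [hlink]; exact not_sphere_pair w⟩
    have hne : σ' ≠ ∅ := Finset.insert_ne_empty _ _
    have hcontra := (H σ' hbd hne).1
    rw [hB, Set.mem_setOf_eq] at hcontra
    have h1 : (1:ℤ) ∈ negFace σ' := mem_negFace.2 (by
      simp only [hσ'def, Finset.mem_insert]
      norm_num)
    have := hcontra h1
    rw [hmemS] at this
    omega
  · -- case 2 ≤ l
    have hl2' : 2 ≤ l := hl2
    set S : Finset ℤ := Sfin (l+1) (m-l+1) with hS
    set x₀ : ℤ := ((m-l : ℕ) : ℤ) with hx₀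
    set D : Finset ℤ := Dfin m (l-1) with hD
    set T : Finset ℤ := np (l-1) (S.erase x₀) with hT
    set σ' : Finset ℤ := D ∪ T with hσ'
    set w : ℤ := (-1:ℤ)^(l-1) * x₀ with hw
    have hmemS : ∀ x : ℤ, x ∈ S ↔ (x = -1 ∨ ((m:ℤ)-2*l+1 ≤ x ∧ x ≤ (m:ℤ)-l+1)) := by
      intro x
      rw [hS, mem_Sfin (by omega)]
      omega
    have hmemT : ∀ x : ℤ, x ∈ T ↔ (-1:ℤ)^(l-1) * x ∈ S.erase x₀ := fun x => mem_np
    have hTabs : ∀ x : ℤ, x ∈ T → x.natAbs ≤ m - l + 1 := by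
      intro x hx
      have h2 := Finset.mem_of_mem_erase ((hmemT x).1 hx)
      rw [hmemS] at h2
      have h4 : ((-1:ℤ)^(l-1) * x).natAbs = x.natAbs := natAbs_neg_one_pow_mul _ _
      omega
    have e1 : 2*l - (l-1) = l+1 := by omega
    have e2 : ((l:ℤ)-1) - ((l-1 : ℕ):ℤ) = 0 := by omega
    have e3 : m - (l-1) = m - l + 1 := by omega
    have hBzero : Bc (l+1) 0 (m-l+1) = {σ | σ ⊆ S} := by
      rw [hS]
      exact Bc_zero (l+1) (m-l+1) (by omega) (by omega)
    -- Claim A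
    have keyA : ∀ ρ : Finset ℤ, Disjoint ρ σ' →
        ((ρ ∪ σ' ∈ Bc (2*l) ((l:ℤ)-1) m) ↔ ρ ⊆ {w}) := by
      intro ρ hρ
      have hchain := negChain (l-1) (2*l) m ((l:ℤ)-1) (ρ ∪ σ')
        (fun j hj => by omega) (fun j hj => by omega)
        (fun j hj => by omega) (by omega)
        (fun j hj => Finset.mem_union_right _
          (Finset.mem_union_left _ (mem_Dfin.2 ⟨j, hj, rfl⟩)))
      rw [hchain, e1, e2, e3, hBzero, Set.mem_setOf_eq]
      have hsets : (ρ ∪ σ') \ D = ρ ∪ T := by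
        ext x
        simp only [Finset.mem_sdiff, Finset.mem_union, hσ']
        constructor
        · rintro ⟨(hx | hx | hx), hxD⟩
          · exact Or.inl hx
          · exact absurd hx hxD
          · exact Or.inr hx
        · rintro (hx | hx)
          · exact ⟨Or.inl hx, fun hxD =>
              (Finset.disjoint_left.1 hρ hx) (Finset.mem_union_left _ hxD)⟩
          · refine ⟨Or.inr (Or.inr hx), fun hxD => ?_⟩
            have h1 := Dfin_abs (show l-1 ≤ m by omega) hxD
            have h5 := hTabs x hx
            omega
      rw [show (ρ ∪ (D ∪ T)) \ D = ρ ∪ T from hsets, np_union]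
      have hTnp : np (l-1) T = S.erase x₀ := by
        rw [hT, np_np]
        exact np_even ⟨l-1, by omega⟩ _
      rw [hTnp]
      constructor
      · intro h x hx
        have hx1 : (-1:ℤ)^(l-1) * x ∈ np (l-1) ρ :=
          mem_np.2 (by rwa [neg_one_pow_mul_self])
        have hx2 : (-1:ℤ)^(l-1) * x ∈ S := h (Finset.mem_union_left _ hx1)
        have hx3 : (-1:ℤ)^(l-1) * x ∉ S.erase x₀ := by
          intro hc
          exact (Finset.disjoint_left.1 hρ hx)
            (Finset.mem_union_right _ ((hmemT x).2 hc))
        have hxeq : (-1:ℤ)^(l-1) * x = x₀ := by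
          by_contra hne
          exact hx3 (Finset.mem_erase.2 ⟨hne, hx2⟩)
        rw [Finset.mem_singleton, hw, ← hxeq, neg_one_pow_mul_self]
      · intro h
        apply Finset.union_subset
        · intro y hy
          have hy1 : (-1:ℤ)^(l-1) * y ∈ ρ := mem_np.1 hy
          have hy2 := h hy1
          rw [Finset.mem_singleton, hw] at hy2
          have hy3 : y = x₀ := by
            have := congrArg (fun z => (-1:ℤ)^(l-1) * z) hy2
            simpa [neg_one_pow_mul_self] using this
          rw [hy3, hmemS]
          right
          constructor <;> [skip; skip] <;> rw [hx₀] <;> omega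
        · exact fun y hy => Finset.mem_of_mem_erase hy
    have hσ'B : σ' ∈ Bc (2*l) ((l:ℤ)-1) m := by
      have := (keyA ∅ (Finset.disjoint_empty_left _)).2 (Finset.empty_subset _)
      rwa [Finset.empty_union] at this
    have hx₀S : x₀ ∈ S := by
      rw [hmemS, hx₀]
      right
      constructor <;> omega
    have h0B : (∅ : Finset ℤ) ∈ Bc (2*l) ((l:ℤ)-1) m := by
      apply inclChain (l-1) (2*l) m ((l:ℤ)-1) ∅
        (fun j hj => by omega) (fun j hj => by omega) (fun j hj => by omega)
      rw [np_empty, e1, e2, e3, hBzero]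
      exact Finset.empty_subset _
    have hwB : ({w} : Finset ℤ) ∈ Bc (2*l) ((l:ℤ)-1) m := by
      apply inclChain (l-1) (2*l) m ((l:ℤ)-1) {w}
        (fun j hj => by omega) (fun j hj => by omega) (fun j hj => by omega)
      rw [np_singleton, e1, e2, e3, hBzero, Set.mem_setOf_eq]
      rw [hw, neg_one_pow_mul_self]
      exact Finset.singleton_subset_iff.2 hx₀S
    have hwσ' : w ∉ σ' := by
      intro hmem
      rcases Finset.mem_union.1 hmem with hx | hx
      · have h1 := Dfin_abs (show l-1 ≤ m by omega) hx
        have h2 : w.natAbs = m - l := by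
          rw [hw, natAbs_neg_one_pow_mul, hx₀]
          simp
        omega
      · have h2 := (hmemT w).1 hx
        rw [hw, neg_one_pow_mul_self] at h2
        exact absurd rfl (Finset.mem_erase.1 h2).1
    have hlink : link σ' (Bc (2*l) ((l:ℤ)-1) m) = {∅, {w}} := by
      ext ρ
      constructor
      · rintro ⟨h1, h2, h3⟩
        rcases Finset.subset_singleton_iff.1 ((keyA ρ h2).1 h3) with rfl | rfl
        · exact Or.inl rfl
        · exact Or.inr rfl
      · rintro (rfl | rfl)
        · exact ⟨h0B, Finset.disjoint_empty_left _, by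
            rw [Finset.empty_union]; exact hσ'B⟩
        · have hdisj : Disjoint ({w} : Finset ℤ) σ' :=
            Finset.disjoint_singleton_left.2 hwσ'
          exact ⟨hwB, hdisj, (keyA {w} hdisj).2 (le_refl _)⟩
    -- negFace σ' is not in the ball
    have hneg : negFace σ' ∉ Bc (2*l) ((l:ℤ)-1) m := by
      intro hmem
      have hθeq : negFace σ' = negFace D ∪ np l (S.erase x₀) := by
        rw [hσ', negFace_eq_np, np_union, ← negFace_eq_np]
        congr 1
        rw [hT, ← negFace_eq_np, negFace_eq_np, np_np]
        congr 1
        omega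
      have hs1 := step_pos (d := 2*l) (n := m) (i := (l:ℤ)-1)
        (by omega) (by omega) (by omega) (by omega) (θ := negFace σ') (by
          rw [hθeq]
          apply Finset.mem_union_left
          rw [mem_negFace]
          refine mem_Dfin.2 ⟨0, by omega, ?_⟩
          norm_num)
      rw [hs1] at hmem
      have hθ1 : (negFace σ').erase ((m:ℕ):ℤ) = Dfin (m-1) (l-2) ∪ np l (S.erase x₀) := by
        rw [hθeq]
        have hDm : negFace D = insert ((m:ℕ):ℤ) (Dfin (m-1) (l-2)) := by
          rw [hD, show l - 1 = (l-2)+1 by omega]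
          exact Dfin_succ (by omega)
        rw [hDm]
        ext x
        simp only [Finset.mem_erase, Finset.mem_union, Finset.mem_insert]
        constructor
        · rintro ⟨hxm, (rfl | hx) | hx⟩
          · exact absurd rfl hxm
          · exact Or.inl hx
          · exact Or.inr hx
        · rintro (hx | hx)
          · have h1 := Dfin_abs (show l-2 ≤ m-1 by omega) hx
            exact ⟨by omega, Or.inl (Or.inr hx)⟩
          · have h2 := (hmemS _).1 (Finset.mem_of_mem_erase (mem_np.1 hx))
            have h4 : ((-1:ℤ)^l * x).natAbs = x.natAbs := natAbs_neg_one_pow_mul _ _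
            exact ⟨by omega, Or.inr hx⟩
      rw [hθ1] at hmem
      have hs2 := negChain (l-2) (2*l-1) (m-1) ((l:ℤ)-1)
        (Dfin (m-1) (l-2) ∪ np l (S.erase x₀))
        (fun j hj => by omega) (fun j hj => by omega) (fun j hj => by omega) (by omega)
        (fun j hj => Finset.mem_union_left _ (mem_Dfin.2 ⟨j, hj, rfl⟩))
      rw [hs2] at hmem
      have hface2 : np (l-2) ((Dfin (m-1) (l-2) ∪ np l (S.erase x₀)) \ Dfin (m-1) (l-2))
          = S.erase x₀ := by
        have hsd : (Dfin (m-1) (l-2) ∪ np l (S.erase x₀)) \ Dfin (m-1) (l-2)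
            = np l (S.erase x₀) := by
          ext x
          simp only [Finset.mem_sdiff, Finset.mem_union]
          constructor
          · rintro ⟨hx | hx, hxD⟩
            · exact absurd hx hxD
            · exact hx
          · intro hx
            refine ⟨Or.inr hx, fun hxD => ?_⟩
            have h1 := Dfin_abs (show l-2 ≤ m-1 by omega) hxD
            have h2 := (hmemS _).1 (Finset.mem_of_mem_erase (mem_np.1 hx))
            have h4 : ((-1:ℤ)^l * x).natAbs = x.natAbs := natAbs_neg_one_pow_mul _ _
            omega
        rw [hsd, np_np]
        exact np_even ⟨l-1, by omega⟩ _
      have f1 : 2*l-1-(l-2) = l+1 := by omega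
      have f2 : ((l:ℤ)-1) - ((l-2 : ℕ):ℤ) = 1 := by omega
      have f3 : m-1-(l-2) = m-l+1 := by omega
      rw [hface2, f1, f2, f3] at hmem
      have hs3 := step_pos (d := l+1) (n := m-l+1) (i := (1:ℤ))
        (by omega) (by omega) (by omega) (by omega) (θ := S.erase x₀) (by
          refine Finset.mem_erase.2 ⟨by rw [hx₀]; omega, ?_⟩
          rw [hmemS]
          omega)
      rw [hs3] at hmem
      have f4 : l + 1 - 1 = l := by omega
      have f5 : m - l + 1 - 1 = m - l := by omega
      rw [f4, f5] at hmem
      set φ₃ := (S.erase x₀).erase ((m-l+1 : ℕ):ℤ) with hφ₃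
      have hmemφ₃ : ∀ x : ℤ, x ∈ φ₃ ↔
          (x = -1 ∨ ((m:ℤ)-2*l+1 ≤ x ∧ x ≤ (m:ℤ)-l-1)) := by
        intro x
        rw [hφ₃]
        simp only [Finset.mem_erase]
        rw [hmemS, hx₀]
        omega
      have hs4 := step_skip (d := l) (n := m-l) (i := (1:ℤ))
        (by omega) (by omega) (by omega) (by omega) (θ := φ₃)
        (by intro h; rw [hmemφ₃] at h; omega)
        (by intro h; rw [hmemφ₃] at h; omega)
      rw [hs4] at hmem
      rcases hmem with hmem | hbad
      swap
      · rw [show (1:ℤ) - 1 = 0 by norm_num,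
          Bc_zero (l-1) (m-l-1) (by omega) (by omega)] at hbad
        have h1 : (1:ℤ) ∈ negFace φ₃ := by
          rw [mem_negFace, hmemφ₃]
          norm_num
        have h2 := hbad h1
        rw [mem_Sfin (by omega)] at h2
        omega
      have hs5 := posChain (l-2) (l-1) (m-l-1) 1 φ₃
        (fun j hj => by omega) (by norm_num)
        (fun j hj => by omega) (by omega)
        (fun j hj => by rw [hmemφ₃]; omega)
      rw [hs5] at hmem
      have g1 : l-1-(l-2) = 1 := by omega
      have g2 : m-l-1-(l-2) = m-2*l+1 := by omega
      have hφ₄ : φ₃ \ Pfin (m-l-1) (l-2) = {-1, ((m-2*l+1 : ℕ):ℤ)} := by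
        ext x
        simp only [Finset.mem_sdiff, Finset.mem_insert, Finset.mem_singleton]
        rw [hmemφ₃, mem_Pfin (by omega)]
        omega
      rw [g1, g2, hφ₄] at hmem
      exact not_mem_Bc11 (by omega) hmem
    have hbd : σ' ∈ boundaryC (Bc (2*l) ((l:ℤ)-1) m) :=
      ⟨hσ'B, by rw [hlink]; exact not_sphere_pair w⟩
    have hneσ : σ' ≠ ∅ := by
      intro h
      have hx : (-(m:ℤ)) ∈ σ' := Finset.mem_union_left _
        (mem_Dfin.2 ⟨0, by omega, by norm_num⟩)
      rw [h] at hx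
      simp at hx
    exact hneg (H σ' hbd hneσ).1

/-- (Observation 3 in the proof of Proposition 4.2.)  For all
`ℓ ≥ 1` and `m ≥ 2ℓ+1`, the boundary complex `∂B^{2ℓ,ℓ-1}_m` is not centrally
symmetric with respect to the involution `v ↦ -v`: some nonempty face's antipode
fails to be a face. -/
theorem statement17 (l m : ℕ) (hl : 1 ≤ l) (hm : 2 * l + 1 ≤ m) :
    ¬ (∀ σ ∈ boundaryC (Bc (2 * l) ((l : ℤ) - 1) m), σ ≠ ∅ →
        negFace σ ∈ boundaryC (Bc (2 * l) ((l : ℤ) - 1) m)) := by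
  exact statement17' l m hl hm

end CS
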